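/- arXiv:1101.4857 — 2 statements merged into one kernel-verified Lean document; each statement's English description precedes it below -/
import Mathlib

section
/- Let λ_β := lim_{N→∞} −(1/N) log P( sup_{n=0,…,N} B(e^{β n}) ≤ 0 ) (this limit exists by supermultiplicativity). Let c(x) := e^{−x/2}/(1 − e^{−x/2}) for x > 0 and β₀ := 2 log(1 + 1/log 2). Then for β > β₀ one has λ_β ≥ log 2 − c(β), and for β ∈ (0, β₀], with m := ⌈β₀/β⌉, one has λ_β ≥ (log 2 − c(β m))/m. -/
open MeasureTheory ProbabilityTheory Filter Real

/-- A standard one-dimensional Brownian motion started at 0, under the probability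
measure `P`: continuous paths, `B 0 = 0`, independent increments, and Gaussian
increments `B t - B s ~ N(0, t - s)` for `0 ≤ s ≤ t`. -/
structure IsStandardBM {Ω : Type*} [MeasurableSpace Ω] (P : Measure Ω) (B : ℝ → Ω → ℝ) : Prop where
  isProb : IsProbabilityMeasure P
  meas : ∀ t : ℝ, Measurable (B t)
  start : ∀ ω, B 0 ω = 0
  cont : ∀ ω, Continuous fun t => B t ω
  gauss : ∀ s t : ℝ, 0 ≤ s → s ≤ t →
    Measure.map (fun ω => B t ω - B s ω) P = gaussianReal 0 (Real.toNNReal (t - s))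
  indep : ∀ (n : ℕ) (t : ℕ → ℝ), Monotone t → (∀ i, 0 ≤ t i) →
    iIndepFun
      (fun i : Fin n => fun ω => B (t (i + 1)) ω - B (t i) ω) P


/-- The survival probability `p β N = P(sup_{n=0,…,N} B(e^{β n}) ≤ 0)`. -/
noncomputable def expSurvival {Ω : Type*} [MeasurableSpace Ω] (P : Measure Ω)
    (B : ℝ → Ω → ℝ) (β : ℝ) (N : ℕ) : ℝ :=
  (P {ω | ∀ n : ℕ, n ≤ N → B (Real.exp (β * n)) ω ≤ 0}).toReal

/-- The rate `λ_β = lim_{N→∞} -(1/N) log p(N)`, realized as a limsup in `EReal`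
(the limit exists in `(0,∞]` by supermultiplicativity, and then equals this limsup). -/
noncomputable def lamBeta {Ω : Type*} [MeasurableSpace Ω] (P : Measure Ω)
    (B : ℝ → Ω → ℝ) (β : ℝ) : EReal :=
  Filter.limsup (fun N : ℕ =>
    ((-(1 / (N : ℝ)) * Real.log (expSurvival P B β N) : ℝ) : EReal)) atTop

/-!
Write `B(e^{βn})` as the sum of independent Gaussian increments, the one ending at `e^{βn}` having
standard deviation `σₙ ≍ e^{βn/2}`, and study the tilted survival quantity
`aₙ(θ) = E[e^{-θ B(e^{βn})}; B(e^{βk}) ≤ 0 for k ≤ n]`. Integrating out the last increment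
(Gaussian tilting plus `P(N(0, σ²) ≤ b) ≤ ½ e^{4b/(5σ)}` for `b ≥ 0`) gives
`aₙ₊₁(θ) ≤ ½ e^{θ²σ²/2 + 4θσ/5} aₙ(θ + 4/(5σ))`, with `σ` the standard deviation of that increment.
Starting from `θ = 0` at level `N`, the tilt at level `n` never exceeds `∑_{k ≥ n} 4/(5σₖ)`, which
is so small against `σ` that every step costs at most `½ e^{c(β)}`; hence
`p(N) ≤ C (e^{c(β)}/2)^N`. For `β ≤ β₀` apply this to the times `e^{βmn}`, which sample the
original sequence.
-/

open Set
open scoped ENNReal NNReal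

section Gaussian

variable {μ : ℝ} {v : ℝ≥0}

lemma gaussianReal_Iic_self (hv : v ≠ 0) : gaussianReal μ v (Iic μ) = 2⁻¹ := by
  have := nullSingletonClass_gaussianReal (μ := μ) hv
  have hsymm : gaussianReal μ v (Ioi μ) = gaussianReal μ v (Iic μ) := by
    have hmap := gaussianReal_map_const_sub (μ := μ) (v := v) (2 * μ)
    rw [show 2 * μ - μ = μ by ring] at hmap
    calc gaussianReal μ v (Ioi μ) = gaussianReal μ v (Ici μ) := measure_congr Ioi_ae_eq_Ici
      _ = (gaussianReal μ v).map (2 * μ - ·) (Iic μ) := by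
        rw [Measure.map_apply (by fun_prop) measurableSet_Iic]
        congr 1
        ext x
        simp only [mem_Ici, mem_preimage, mem_Iic]
        constructor <;> intro h <;> linarith
      _ = gaussianReal μ v (Iic μ) := by rw [hmap]
  have htot : gaussianReal μ v (Iic μ) * 2 = 1 := by
    rw [mul_two]
    nth_rewrite 2 [← hsymm]
    rw [← compl_Iic, measure_add_measure_compl measurableSet_Iic, measure_univ]
  exact ENNReal.eq_inv_of_mul_eq_one_left htot

lemma gaussianPDFReal_le_inv_sqrt (x : ℝ) :
    gaussianPDFReal μ v x ≤ (√(2 * π * v))⁻¹ := by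
  rw [gaussianPDFReal]
  refine mul_le_of_le_one_right (by positivity) (exp_le_one_iff.2 ?_)
  exact div_nonpos_of_nonpos_of_nonneg (neg_nonpos.2 (sq_nonneg _)) (by positivity)

lemma gaussianReal_Iic_le_half_mul_exp (hv : v ≠ 0) {b : ℝ} (hb : μ ≤ b) :
    gaussianReal μ v (Iic b) ≤ ENNReal.ofReal (2⁻¹ * exp (4 / 5 * (b - μ) / √v)) := by
  have hσ : 0 < √(v : ℝ) := Real.sqrt_pos.2 (by positivity)
  have hmiddle : gaussianReal μ v (Ioc μ b) ≤ ENNReal.ofReal ((√(2 * π * v))⁻¹ * (b - μ)) := by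
    rw [gaussianReal_apply _ hv]
    calc ∫⁻ x in Ioc μ b, gaussianPDF μ v x
        ≤ ∫⁻ _ in Ioc μ b, ENNReal.ofReal (√(2 * π * v))⁻¹ :=
          lintegral_mono fun x => ENNReal.ofReal_le_ofReal (gaussianPDFReal_le_inv_sqrt x)
      _ = _ := by rw [setLIntegral_const, Real.volume_Ioc, ENNReal.ofReal_mul (by positivity)]
  -- `√(2π) ≥ 5/2`, so the density is at most `2 / (5 √v)`; then use `1 + x ≤ exp x`.
  have hsqrt : 5 / 2 * √(v : ℝ) ≤ √(2 * π * v) := by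
    rw [Real.sqrt_mul (by positivity)]
    gcongr
    rw [Real.le_sqrt (by norm_num) (by positivity)]
    nlinarith [Real.pi_gt_d2]
  have hreal : 2⁻¹ + (√(2 * π * v))⁻¹ * (b - μ) ≤ 2⁻¹ * exp (4 / 5 * (b - μ) / √v) := by
    have h1 : (√(2 * π * v))⁻¹ * (b - μ) ≤ 2 / 5 * ((b - μ) / √v) := by
      rw [inv_mul_eq_div, div_le_iff₀ (by positivity)]
      have : 0 ≤ (b - μ) / √v := div_nonneg (by linarith) hσ.le
      calc b - μ = (b - μ) / √v * √v := by field_simp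
        _ ≤ _ := by nlinarith
    have h2 := add_one_le_exp (4 / 5 * (b - μ) / √v)
    rw [mul_div_assoc] at h2 ⊢
    linarith
  calc gaussianReal μ v (Iic b) ≤ gaussianReal μ v (Iic μ ∪ Ioc μ b) := by
        rw [Iic_union_Ioc_eq_Iic hb]
    _ ≤ gaussianReal μ v (Iic μ) + gaussianReal μ v (Ioc μ b) := measure_union_le _ _
    _ ≤ ENNReal.ofReal 2⁻¹ + ENNReal.ofReal ((√(2 * π * v))⁻¹ * (b - μ)) := by
        rw [gaussianReal_Iic_self hv, ENNReal.ofReal_inv_of_pos two_pos, ENNReal.ofReal_ofNat]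
        gcongr
    _ ≤ _ := by
        rw [← ENNReal.ofReal_add (by norm_num) (mul_nonneg (by positivity) (by linarith))]
        exact ENNReal.ofReal_le_ofReal hreal

lemma setLIntegral_exp_neg_mul_gaussianReal (hv : v ≠ 0) (θ : ℝ) {s : Set ℝ}
    (hs : MeasurableSet s) :
    ∫⁻ x in s, ENNReal.ofReal (exp (-θ * x)) ∂gaussianReal μ v
      = ENNReal.ofReal (exp (θ ^ 2 * v / 2 - θ * μ)) * gaussianReal (μ - θ * v) v s := by
  have hdens : ∀ x, exp (-θ * x) * gaussianPDFReal μ v x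
      = exp (θ ^ 2 * v / 2 - θ * μ) * gaussianPDFReal (μ - θ * v) v x := by
    intro x
    have hv' : (v : ℝ) ≠ 0 := by positivity
    simp only [gaussianPDFReal]
    rw [mul_left_comm, ← exp_add, mul_left_comm, ← exp_add]
    congr 2
    field_simp
    ring
  rw [gaussianReal_of_var_ne_zero _ hv, setLIntegral_withDensity_eq_setLIntegral_mul _
    (measurable_gaussianPDF _ _) (by fun_prop) hs, gaussianReal_apply _ hv,
    ← lintegral_const_mul' _ _ ENNReal.ofReal_ne_top]
  refine setLIntegral_congr_fun hs fun x _ => ?_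
  simp only [Pi.mul_apply, gaussianPDF]
  rw [← ENNReal.ofReal_mul (gaussianPDFReal_nonneg _ _ _), ← ENNReal.ofReal_mul (exp_nonneg _),
    mul_comm, hdens]

lemma setLIntegral_Iic_exp_gaussianReal_le (hv : v ≠ 0) {θ c : ℝ} (hθ : 0 ≤ θ) (hc : c ≤ 0) :
    ∫⁻ y in Iic (-c), ENNReal.ofReal (exp (-θ * (c + y))) ∂gaussianReal 0 v
      ≤ ENNReal.ofReal (2⁻¹ * exp (θ ^ 2 * v / 2 + 4 / 5 * θ * √v))
        * ENNReal.ofReal (exp (-(θ + 4 / 5 / √v) * c)) := by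
  have hσ : 0 < √(v : ℝ) := Real.sqrt_pos.2 (by positivity)
  have hsplit : ∀ y, ENNReal.ofReal (exp (-θ * (c + y)))
      = ENNReal.ofReal (exp (-θ * c)) * ENNReal.ofReal (exp (-θ * y)) := fun y => by
    rw [← ENNReal.ofReal_mul (exp_nonneg _), ← exp_add, mul_add]
  simp_rw [hsplit]
  rw [lintegral_const_mul' _ _ ENNReal.ofReal_ne_top,
    setLIntegral_exp_neg_mul_gaussianReal hv θ measurableSet_Iic, mul_zero, sub_zero, zero_sub]
  have hexp : -θ * c + θ ^ 2 * v / 2 + 4 / 5 * (-c - -(θ * v)) / √v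
      = θ ^ 2 * v / 2 + 4 / 5 * θ * √v + -(θ + 4 / 5 / √v) * c := by
    have hv2 : (v : ℝ) = √v ^ 2 := (Real.sq_sqrt v.coe_nonneg).symm
    generalize √(v : ℝ) = σ at hσ hv2 ⊢
    rw [hv2]
    field_simp
    ring
  calc ENNReal.ofReal (exp (-θ * c))
        * (ENNReal.ofReal (exp (θ ^ 2 * v / 2)) * gaussianReal (-(θ * v)) v (Iic (-c)))
      ≤ ENNReal.ofReal (exp (-θ * c)) * (ENNReal.ofReal (exp (θ ^ 2 * v / 2))
        * ENNReal.ofReal (2⁻¹ * exp (4 / 5 * (-c - -(θ * v)) / √v))) := by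
        gcongr
        exact gaussianReal_Iic_le_half_mul_exp hv (by nlinarith [v.coe_nonneg])
    _ = ENNReal.ofReal (2⁻¹ * exp (-θ * c + θ ^ 2 * v / 2 + 4 / 5 * (-c - -(θ * v)) / √v)) := by
        rw [← ENNReal.ofReal_mul (by positivity), ← ENNReal.ofReal_mul (exp_nonneg _),
          exp_add, exp_add]
        ring_nf
    _ = _ := by
        rw [hexp, exp_add, ← ENNReal.ofReal_mul (by positivity), ← mul_assoc]

end Gaussian

section Independence

variable {Ω E F : Type*} [MeasurableSpace Ω] [MeasurableSpace E] [MeasurableSpace F]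
  {P : Measure Ω} [IsFiniteMeasure P] {X : Ω → E}

lemma ProbabilityTheory.IndepFun.lintegral_comp_le {Y : Ω → F} (hXY : IndepFun X Y P)
    (hX : Measurable X) (hY : Measurable Y) {H : E × F → ℝ≥0∞} (hH : Measurable H) :
    ∫⁻ ω, H (X ω, Y ω) ∂P ≤ ∫⁻ ω, ∫⁻ y, H (X ω, y) ∂(P.map Y) ∂P := by
  rw [← lintegral_map hH (hX.prodMk hY),
    (indepFun_iff_map_prod_eq_prod_map_map hX.aemeasurable hY.aemeasurable).1 hXY]
  exact (lintegral_prod_le _).trans (lintegral_map_le _ _)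

lemma setLIntegral_exp_add_le_of_indepFun {Y : Ω → ℝ} {v : ℝ≥0} (hXY : IndepFun X Y P)
    (hX : Measurable X) (hY : Measurable Y) (hYlaw : P.map Y = gaussianReal 0 v) (hv : v ≠ 0)
    {s : Set E} (hs : MeasurableSet s) {f : E → ℝ} (hf : Measurable f)
    (hfs : ∀ x ∈ s, f x ≤ 0) {θ : ℝ} (hθ : 0 ≤ θ) :
    ∫⁻ ω in X ⁻¹' s ∩ {ω | f (X ω) + Y ω ≤ 0}, ENNReal.ofReal (exp (-θ * (f (X ω) + Y ω))) ∂P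
      ≤ ENNReal.ofReal (2⁻¹ * exp (θ ^ 2 * v / 2 + 4 / 5 * θ * √v))
        * ∫⁻ ω in X ⁻¹' s, ENNReal.ofReal (exp (-(θ + 4 / 5 / √v) * f (X ω))) ∂P := by
  set K := ENNReal.ofReal (2⁻¹ * exp (θ ^ 2 * v / 2 + 4 / 5 * θ * √v))
  set H : E × ℝ → ℝ≥0∞ := {p | p.1 ∈ s ∧ f p.1 + p.2 ≤ 0}.indicator
    fun p => ENNReal.ofReal (exp (-θ * (f p.1 + p.2)))
  have hHmeas : Measurable H :=
    (by fun_prop : Measurable fun p : E × ℝ => ENNReal.ofReal (exp (-θ * (f p.1 + p.2)))).indicator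
      ((hs.preimage measurable_fst).inter
        (measurableSet_le ((hf.comp measurable_fst).add measurable_snd) measurable_const))
  have hinner : ∀ x, ∫⁻ y, H (x, y) ∂gaussianReal 0 v
      ≤ K * s.indicator (fun x => ENNReal.ofReal (exp (-(θ + 4 / 5 / √v) * f x))) x := by
    intro x
    by_cases hx : x ∈ s
    · rw [indicator_of_mem hx]
      refine le_trans (le_of_eq ?_) (setLIntegral_Iic_exp_gaussianReal_le hv hθ (hfs x hx))
      rw [← lintegral_indicator measurableSet_Iic]
      refine lintegral_congr fun y => ?_
      simp only [H, indicator, mem_ofPred_eq, mem_Iic, hx, true_and,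
        le_neg_iff_add_nonpos_left]
    · simp [H, hx]
  calc ∫⁻ ω in X ⁻¹' s ∩ {ω | f (X ω) + Y ω ≤ 0}, ENNReal.ofReal (exp (-θ * (f (X ω) + Y ω))) ∂P
      = ∫⁻ ω, H (X ω, Y ω) ∂P := by
        rw [← lintegral_indicator ((hs.preimage hX).inter
          (measurableSet_le (f := fun ω => f (X ω) + Y ω) (by fun_prop) measurable_const))]
        rfl
    _ ≤ ∫⁻ ω, ∫⁻ y, H (X ω, y) ∂(P.map Y) ∂P := hXY.lintegral_comp_le hX hY hHmeas
    _ ≤ ∫⁻ ω, K * s.indicator (fun x => ENNReal.ofReal (exp (-(θ + 4 / 5 / √v) * f x))) (X ω) ∂P :=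
        lintegral_mono fun ω => hYlaw ▸ hinner (X ω)
    _ = _ := by
        rw [lintegral_const_mul' _ _ ENNReal.ofReal_ne_top, ← lintegral_indicator (hs.preimage hX)]
        rfl

end Independence

lemma le_mul_pow_of_tilt_recursion {a : ℕ → ℝ → ℝ≥0∞} {σ T : ℕ → ℝ} {x C : ℝ}
    (hσ : ∀ n, 0 < σ n) (hT : ∀ n, T (n + 1) + 4 / 5 / σ n = T n)
    (hTσ : ∀ n, T (n + 1) * σ n ≤ 4 / 5 * x) (hx : x ≤ 1)
    (h0 : ∀ θ, 0 ≤ θ → θ ≤ T 0 → a 0 θ ≤ ENNReal.ofReal C)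
    (hstep : ∀ n θ, 0 ≤ θ → a (n + 1) θ ≤
      ENNReal.ofReal (2⁻¹ * exp (θ ^ 2 * σ n ^ 2 / 2 + 4 / 5 * θ * σ n)) * a n (θ + 4 / 5 / σ n))
    (n : ℕ) {θ : ℝ} (hθ0 : 0 ≤ θ) (hθ : θ ≤ T n) :
    a n θ ≤ ENNReal.ofReal (C * (2⁻¹ * exp x) ^ n) := by
  induction n generalizing θ with
  | zero => simpa using h0 θ hθ0 hθ
  | succ n ih =>
    have hw : θ * σ n ≤ 4 / 5 * x := (mul_le_mul_of_nonneg_right hθ (hσ n).le).trans (hTσ n)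
    have hw0 : 0 ≤ θ * σ n := mul_nonneg hθ0 (hσ n).le
    have hcost : θ ^ 2 * σ n ^ 2 / 2 + 4 / 5 * θ * σ n ≤ x := by nlinarith
    calc a (n + 1) θ ≤ ENNReal.ofReal (2⁻¹ * exp (θ ^ 2 * σ n ^ 2 / 2 + 4 / 5 * θ * σ n))
          * a n (θ + 4 / 5 / σ n) := hstep n θ hθ0
      _ ≤ ENNReal.ofReal (2⁻¹ * exp x) * ENNReal.ofReal (C * (2⁻¹ * exp x) ^ n) := by
          gcongr
          exact ih (by have := hσ n; positivity) (by linarith [hT n])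
      _ = ENNReal.ofReal (C * (2⁻¹ * exp x) ^ (n + 1)) := by
          rw [← ENNReal.ofReal_mul (by positivity)]
          ring_nf

lemma le_limsup_of_le_mul_pow_div {p : ℕ → ℝ} {C q : ℝ} {m : ℕ} (hm : 0 < m)
    (hp : ∀ N, 0 < p N) (hC : 0 < C) (hq0 : 0 < q) (hq1 : q ≤ 1)
    (h : ∀ N, p N ≤ C * q ^ (N / m)) :
    ((-log q / m : ℝ) : EReal)
      ≤ limsup (fun N : ℕ => ((-(1 / (N : ℝ)) * log (p N) : ℝ) : EReal)) atTop := by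
  set L := -log q
  have hL : 0 ≤ L := neg_nonneg.2 (log_nonpos hq0.le hq1)
  have hmR : (0 : ℝ) < m := Nat.cast_pos.2 hm
  have hlower : ∀ N : ℕ, 1 ≤ N →
      -log C * (1 / N) + (1 / m - 1 / N) * L ≤ -(1 / (N : ℝ)) * log (p N) := by
    intro N hN
    have hNR : (0 : ℝ) < N := Nat.cast_pos.2 hN
    have hfloor : (N : ℝ) ≤ m * ((N / m : ℕ) + 1) := by
      exact_mod_cast (Nat.lt_mul_div_succ N hm).le
    have hfrac : 1 / (m : ℝ) - 1 / N ≤ (N / m : ℕ) / N := by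
      rw [div_sub_div _ _ hmR.ne' hNR.ne', div_le_div_iff₀ (by positivity) hNR]
      nlinarith
    have hlog : log (p N) ≤ log C - (N / m : ℕ) * L := by
      calc log (p N) ≤ log (C * q ^ (N / m)) := log_le_log (hp N) (h N)
        _ = log C - (N / m : ℕ) * L := by
          rw [log_mul hC.ne' (pow_pos hq0 _).ne', log_pow]
          ring
    calc -log C * (1 / N) + (1 / m - 1 / N) * L
        ≤ -log C * (1 / N) + (N / m : ℕ) / N * L := by gcongr
      _ = -(1 / (N : ℝ)) * (log C - (N / m : ℕ) * L) := by ring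
      _ ≤ -(1 / (N : ℝ)) * log (p N) :=
        mul_le_mul_of_nonpos_left hlog (neg_nonpos.2 (by positivity))
  have hlim : Tendsto (fun N : ℕ => -log C * (1 / N) + (1 / m - 1 / N) * L) atTop
      (nhds (L / m)) := by
    have h1 : Tendsto (fun N : ℕ => 1 / (N : ℝ)) atTop (nhds 0) :=
      tendsto_one_div_atTop_nhds_zero_nat
    convert ((tendsto_const_nhds (x := -log C)).mul h1).add
      (((tendsto_const_nhds (x := 1 / (m : ℝ))).sub h1).mul (tendsto_const_nhds (x := L))) using 2
    ring
  rw [← (EReal.tendsto_coe.2 hlim).limsup_eq]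
  exact limsup_le_limsup
    ((eventually_ge_atTop 1).mono fun N hN => EReal.coe_le_coe_iff.2 (hlower N hN))

-- The constant `c(β)` of the statement.
noncomputable def rateDefect (β : ℝ) : ℝ := exp (-β / 2) / (1 - exp (-β / 2))

lemma rateDefect_le_log_two {b : ℝ} (hb : 2 * log (1 + 1 / log 2) ≤ b) :
    rateDefect b ≤ log 2 := by
  have hL : 0 < log 2 := log_pos one_lt_two
  have hρ : exp (-b / 2) ≤ log 2 / (log 2 + 1) := by
    calc exp (-b / 2) ≤ exp (-log (1 + 1 / log 2)) := exp_le_exp.2 (by linarith)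
      _ = log 2 / (log 2 + 1) := by
        rw [exp_neg, exp_log (by positivity)]
        field_simp
  rw [le_div_iff₀ (by positivity)] at hρ
  rw [rateDefect, div_le_iff₀ (by nlinarith)]
  linarith

namespace IsStandardBM

variable {Ω : Type*} [MeasurableSpace Ω] {P : Measure Ω} {B : ℝ → Ω → ℝ} {t : ℕ → ℝ}

lemma sum_range_increments (hB : IsStandardBM P B) (h0 : t 0 = 0) (n : ℕ) (ω : Ω) :
    ∑ k ∈ Finset.range n, (B (t (k + 1)) ω - B (t k) ω) = B (t n) ω := by
  rw [Finset.sum_range_sub (fun k => B (t k) ω), h0, hB.start, sub_zero]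

lemma indepFun_values_increment (hB : IsStandardBM P B) (ht : Monotone t) (h0 : t 0 = 0)
    (n : ℕ) :
    IndepFun (fun ω (j : Fin (n + 1)) => B (t (j + 1)) ω)
      (fun ω => B (t (n + 2)) ω - B (t (n + 1)) ω) P := by
  set D : Fin (n + 2) → Ω → ℝ := fun i ω => B (t (i + 1)) ω - B (t i) ω
  have hDmeas : ∀ i, Measurable (D i) := fun i => (hB.meas _).sub (hB.meas _)
  have hsplit := indep_iSup_of_disjoint (fun i => (hDmeas i).comap_le)
    ((iIndepFun_iff_iIndep _ _ _).1
      (hB.indep (n + 2) t ht fun i => h0 ▸ ht (Nat.zero_le i)))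
    (disjoint_compl_left (a := ({Fin.last (n + 1)} : Set (Fin (n + 2)))))
  rw [IndepFun_iff_Indep]
  refine indep_of_indep_of_le_right (indep_of_indep_of_le_left hsplit ?_) ?_
  -- each value telescopes into increments other than the last one
  · refine Measurable.comap_le ((@measurable_pi_iff _ _ _ (⨆ i ∈ _, _) _ _).2 fun j => ?_)
    simp_rw [← hB.sum_range_increments h0 (j + 1)]
    refine Finset.measurable_sum _ fun k hk => Measurable.of_comap_le ?_
    have hk : k < n + 1 := (Finset.mem_range.1 hk).trans_le (by omega)
    exact le_iSup₂ (f := fun i (_ : i ∈ ({Fin.last (n + 1)} : Set (Fin (n + 2)))ᶜ) =>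
      MeasurableSpace.comap (D i) inferInstance) (⟨k, by omega⟩ : Fin (n + 2))
      (by simp [Fin.ext_iff, hk.ne])
  · exact le_iSup₂ (f := fun i (_ : i ∈ ({Fin.last (n + 1)} : Set (Fin (n + 2)))) =>
      MeasurableSpace.comap (D i) inferInstance) (Fin.last (n + 1)) rfl

lemma measure_forall_le_zero_pos (hB : IsStandardBM P B) (ht : StrictMono t) (h0 : t 0 = 0)
    (N : ℕ) : 0 < P {ω | ∀ n ≤ N, B (t (n + 1)) ω ≤ 0} := by
  have ht0 : ∀ i, 0 ≤ t i := fun i => h0 ▸ ht.monotone (Nat.zero_le i)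
  set D : Fin (N + 1) → Ω → ℝ := fun i ω => B (t (i + 1)) ω - B (t i) ω
  have hhalf : ∀ i, P (D i ⁻¹' Iic 0) = 2⁻¹ := fun i => by
    rw [← Measure.map_apply (f := D i) ((hB.meas _).sub (hB.meas _)) measurableSet_Iic,
      hB.gauss _ _ (ht0 i) (ht.monotone (Nat.le_succ i)), gaussianReal_Iic_self]
    simpa using ht (Nat.lt_succ_self i)
  have hsub : ⋂ i, D i ⁻¹' Iic 0 ⊆ {ω | ∀ n ≤ N, B (t (n + 1)) ω ≤ 0} := fun ω hω n hn => by
    rw [← hB.sum_range_increments h0]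
    refine Finset.sum_nonpos fun k hk => ?_
    exact mem_iInter.1 hω ⟨k, by simp at hk; omega⟩
  calc 0 < ∏ _i : Fin (N + 1), (2⁻¹ : ℝ≥0∞) := by simp [ENNReal.pow_pos]
    _ = P (⋂ i, D i ⁻¹' Iic 0) := by
      rw [(hB.indep (N + 1) t ht.monotone ht0).meas_iInter
        fun i => ⟨Iic 0, measurableSet_Iic, rfl⟩]
      exact Finset.prod_congr rfl fun i _ => (hhalf i).symm
    _ ≤ _ := measure_mono hsub

end IsStandardBM

-- The leading `0` lets `B (e^{βn})` telescope into independent increments, as `B 0 = 0`.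
noncomputable def expTimes (β : ℝ) : ℕ → ℝ
  | 0 => 0
  | k + 1 => exp (β * k)

lemma expTimes_strictMono {β : ℝ} (hβ : 0 < β) : StrictMono (expTimes β) := by
  refine strictMono_nat_of_lt_succ fun k => ?_
  cases k with
  | zero => exact exp_pos _
  | succ k => exact exp_lt_exp.2 (by push_cast [expTimes]; nlinarith)

lemma sqrt_exp_succ_sub_exp (β : ℝ) (n : ℕ) :
    √(exp (β * (n + 1 : ℕ)) - exp (β * n)) = √(1 - exp (-β)) / exp (-β / 2) ^ (n + 1) := by
  have hdiff : exp (β * (n + 1 : ℕ)) - exp (β * n)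
      = (1 - exp (-β)) * exp (β * (n + 1 : ℕ) / 2) ^ 2 := by
    rw [← exp_nat_mul, sub_mul, one_mul, ← exp_add]
    push_cast
    ring_nf
  have hρ : exp (-β / 2) ^ (n + 1) = (exp (β * (n + 1 : ℕ) / 2))⁻¹ := by
    rw [← exp_nat_mul, ← exp_neg]
    push_cast
    ring_nf
  rw [hdiff, Real.sqrt_mul' _ (sq_nonneg _), Real.sqrt_sq (exp_nonneg _), hρ, div_inv_eq_mul]

section Survival

variable {Ω : Type*} {B : ℝ → Ω → ℝ} {β : ℝ}

def survivalSet (B : ℝ → Ω → ℝ) (β : ℝ) (N : ℕ) : Set Ω :=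
  {ω | ∀ n : ℕ, n ≤ N → B (exp (β * n)) ω ≤ 0}

lemma survivalSet_eq_preimage (N : ℕ) :
    survivalSet B β N
      = (fun ω (j : Fin (N + 1)) => B (exp (β * j)) ω) ⁻¹' univ.pi fun _ => Iic 0 := by
  ext ω
  simp only [survivalSet, mem_ofPred_eq, mem_preimage, mem_univ_pi, mem_Iic, Fin.forall_iff,
    Nat.lt_succ_iff]

lemma survivalSet_succ (N : ℕ) :
    survivalSet B β (N + 1) = survivalSet B β N ∩ {ω | B (exp (β * (N + 1 : ℕ))) ω ≤ 0} := by
  ext ω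
  simp only [survivalSet, mem_inter_iff, mem_ofPred_eq]
  exact ⟨fun h => ⟨fun n hn => h n (by omega), h _ le_rfl⟩,
    fun h n hn => (Nat.le_succ_iff.1 hn).elim (h.1 n) fun e => e ▸ h.2⟩

variable [MeasurableSpace Ω] {P : Measure Ω}

lemma expSurvival_le_expSurvival_mul [IsFiniteMeasure P] {m : ℕ} (hm : 0 < m) (N : ℕ) :
    expSurvival P B β N ≤ expSurvival P B (β * m) (N / m) := by
  refine ENNReal.toReal_mono (measure_ne_top _ _) (measure_mono fun ω hω j hj => ?_)
  rw [mul_assoc, ← Nat.cast_mul]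
  exact hω (m * j) (by rw [Nat.mul_comm]; exact (Nat.le_div_iff_mul_le hm).1 hj)

namespace IsStandardBM

lemma setLIntegral_survivalSet_succ_le (hB : IsStandardBM P B) (hβ : 0 < β) (n : ℕ) {θ : ℝ}
    (hθ : 0 ≤ θ) :
    ∫⁻ ω in survivalSet B β (n + 1), ENNReal.ofReal (exp (-θ * B (exp (β * (n + 1 : ℕ))) ω)) ∂P
      ≤ ENNReal.ofReal (2⁻¹ * exp (θ ^ 2 * (exp (β * (n + 1 : ℕ)) - exp (β * n)) / 2
          + 4 / 5 * θ * √(exp (β * (n + 1 : ℕ)) - exp (β * n))))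
        * ∫⁻ ω in survivalSet B β n, ENNReal.ofReal
          (exp (-(θ + 4 / 5 / √(exp (β * (n + 1 : ℕ)) - exp (β * n))) * B (exp (β * n)) ω)) ∂P := by
  have := hB.isProb
  have hmono := expTimes_strictMono hβ
  set X : Ω → Fin (n + 1) → ℝ := fun ω j => B (exp (β * j)) ω
  set Y : Ω → ℝ := fun ω => B (exp (β * (n + 1 : ℕ))) ω - B (exp (β * n)) ω
  have hlt : exp (β * n) < exp (β * (n + 1 : ℕ)) := hmono (n + 1).lt_succ_self
  have key := setLIntegral_exp_add_le_of_indepFun (P := P) (X := X) (Y := Y)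
    (hB.indepFun_values_increment hmono.monotone rfl n)
    (measurable_pi_iff.2 fun j => hB.meas _) ((hB.meas _).sub (hB.meas _))
    (hB.gauss _ _ (exp_pos _).le hlt.le) (Real.toNNReal_pos.2 (sub_pos.2 hlt)).ne'
    (MeasurableSet.univ_pi fun _ => measurableSet_Iic) (measurable_pi_apply (Fin.last n))
    (fun u hu => hu _ (mem_univ _)) hθ
  rw [Real.coe_toNNReal _ (sub_nonneg.2 hlt.le)] at key
  have hsum : ∀ ω, X ω (Fin.last n) + Y ω = B (exp (β * (n + 1 : ℕ))) ω := fun ω => by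
    simp [X, Y]
  simp only [hsum] at key
  rwa [survivalSet_succ, survivalSet_eq_preimage]

lemma setLIntegral_survivalSet_zero_le (hB : IsStandardBM P B) (θ : ℝ) :
    ∫⁻ ω in survivalSet B β 0, ENNReal.ofReal (exp (-θ * B (exp (β * (0 : ℕ))) ω)) ∂P
      ≤ ENNReal.ofReal (exp (θ ^ 2 / 2)) := by
  have := hB.isProb
  have hlaw : P.map (B 1) = gaussianReal 0 1 := by
    simpa [hB.start] using hB.gauss 0 1 le_rfl zero_le_one
  have hset : survivalSet B β 0 = B 1 ⁻¹' Iic 0 := by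
    ext ω
    simp [survivalSet]
  simp only [Nat.cast_zero, mul_zero, exp_zero]
  rw [hset, ← setLIntegral_map (f := fun y => ENNReal.ofReal (exp (-θ * y))) measurableSet_Iic
    (by fun_prop) (hB.meas 1), hlaw,
    setLIntegral_exp_neg_mul_gaussianReal one_ne_zero θ measurableSet_Iic]
  calc _ ≤ ENNReal.ofReal (exp (θ ^ 2 * (1 : ℝ≥0) / 2 - θ * 0)) * 1 := by gcongr; exact prob_le_one
    _ = _ := by simp

lemma exists_expSurvival_le (hB : IsStandardBM P B) (hβ : 0 < β)
    (hc : rateDefect β ≤ 1) :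
    ∃ C > 0, ∀ N, expSurvival P B β N ≤ C * (2⁻¹ * exp (rateDefect β)) ^ N := by
  have := hB.isProb
  set ρ := exp (-β / 2)
  set d := √(1 - exp (-β))
  have hρ0 : 0 < ρ := exp_pos _
  have hρ1 : ρ < 1 := exp_lt_one_iff.2 (by linarith)
  have h1ρ : 0 < 1 - ρ := sub_pos.2 hρ1
  have hd : 0 < d := Real.sqrt_pos.2 (sub_pos.2 (exp_lt_one_iff.2 (by linarith)))
  set σ : ℕ → ℝ := fun n => √(exp (β * (n + 1 : ℕ)) - exp (β * n))
  have hσ : ∀ n, σ n = d / ρ ^ (n + 1) := sqrt_exp_succ_sub_exp β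
  -- `T n = ∑_{k ≥ n} 4 / (5 σ k)` bounds the tilt accumulated on the way down to level `n`.
  set T : ℕ → ℝ := fun n => 4 / 5 * ρ ^ (n + 1) / ((1 - ρ) * d)
  have hT0 : 0 ≤ T 0 := by positivity
  refine ⟨exp (T 0 ^ 2 / 2), exp_pos _, fun N => ?_⟩
  have hbound := le_mul_pow_of_tilt_recursion (x := rateDefect β) (C := exp (T 0 ^ 2 / 2))
    (σ := σ) (T := T)
    (a := fun n θ => ∫⁻ ω in survivalSet B β n, ENNReal.ofReal (exp (-θ * B (exp (β * n)) ω)) ∂P)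
    (fun n => by rw [hσ]; positivity)
    (fun n => by
      rw [hσ]
      dsimp only [T]
      field_simp
      ring)
    (fun n => le_of_eq (by
      rw [hσ, show rateDefect β = ρ / (1 - ρ) from rfl]
      dsimp only [T]
      field_simp
      ring))
    hc
    (fun θ _ hθ => (hB.setLIntegral_survivalSet_zero_le θ).trans
      (ENNReal.ofReal_le_ofReal (exp_le_exp.2 (by gcongr))))
    (fun n θ hθ => by
      have hlt : exp (β * n) < exp (β * (n + 1 : ℕ)) := expTimes_strictMono hβ (n + 1).lt_succ_self
      rw [show σ n ^ 2 = _ from Real.sq_sqrt (sub_nonneg.2 hlt.le)]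
      exact hB.setLIntegral_survivalSet_succ_le hβ n hθ)
    N le_rfl (by positivity)
  simp only [neg_zero, zero_mul, exp_zero, ENNReal.ofReal_one, setLIntegral_one] at hbound
  exact ENNReal.toReal_le_of_le_ofReal (by positivity) hbound

lemma le_lamBeta (hB : IsStandardBM P B) (hβ : 0 < β) {m : ℕ} (hm : 0 < m)
    (hc : rateDefect (β * m) ≤ log 2) :
    (((log 2 - rateDefect (β * m)) / m : ℝ) : EReal) ≤ lamBeta P B β := by
  have := hB.isProb
  obtain ⟨C, hC, hle⟩ := hB.exists_expSurvival_le (mul_pos hβ (Nat.cast_pos.2 hm))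
    (hc.trans (log_two_lt_d9.le.trans (by norm_num)))
  have hq : 2⁻¹ * exp (rateDefect (β * m)) ≤ 1 := by
    calc 2⁻¹ * exp (rateDefect (β * m)) ≤ 2⁻¹ * exp (log 2) := by gcongr
      _ = 1 := by rw [exp_log two_pos]; norm_num
  have hlogq : -log (2⁻¹ * exp (rateDefect (β * m))) = log 2 - rateDefect (β * m) := by
    rw [log_mul (by norm_num) (exp_pos _).ne', log_inv, log_exp]
    ring
  rw [← hlogq]
  exact le_limsup_of_le_mul_pow_div hm
    (fun N => ENNReal.toReal_pos
      (hB.measure_forall_le_zero_pos (expTimes_strictMono hβ) rfl N).ne' (measure_ne_top _ _))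
    hC (by positivity) hq fun N => (expSurvival_le_expSurvival_mul hm N).trans (hle _)

end IsStandardBM

end Survival


/-- Lower bounds for `λ_β`: with `c(x) = e^{-x/2}/(1 - e^{-x/2})` and
`β₀ = 2 log(1 + 1/log 2)`, one has `λ_β ≥ log 2 - c(β)` for `β > β₀`, and
`λ_β ≥ (log 2 - c(βm))/m` with `m = ⌈β₀/β⌉` for `β ∈ (0, β₀]`. -/
theorem lamBeta_lower_bounds
    {Ω : Type*} [MeasurableSpace Ω] (P : Measure Ω) (B : ℝ → Ω → ℝ)
    (hB : IsStandardBM P B) (β : ℝ) (hβ : 0 < β) :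
    (2 * Real.log (1 + 1 / Real.log 2) < β →
      ((Real.log 2 - Real.exp (-β / 2) / (1 - Real.exp (-β / 2)) : ℝ) : EReal) ≤
        lamBeta P B β) ∧
    (β ≤ 2 * Real.log (1 + 1 / Real.log 2) →
      ∀ m : ℕ, m = ⌈2 * Real.log (1 + 1 / Real.log 2) / β⌉₊ →
        (((Real.log 2 -
            Real.exp (-(β * m) / 2) / (1 - Real.exp (-(β * m) / 2))) / m : ℝ) : EReal) ≤
          lamBeta P B β) := by
  constructor
  · intro hlarge
    simpa [rateDefect] using
      hB.le_lamBeta hβ one_pos (rateDefect_le_log_two (by simpa using hlarge.le))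
  · intro _ m hm
    have hβ₀ : 0 < 2 * log (1 + 1 / log 2) := by
      have := log_pos one_lt_two
      have : 0 < log (1 + 1 / log 2) := log_pos (by simp [this])
      linarith
    have hβm : 2 * log (1 + 1 / log 2) ≤ β * m := by
      rw [hm, ← div_le_iff₀' hβ]
      exact Nat.le_ceil _
    exact hB.le_lamBeta hβ (hm ▸ Nat.ceil_pos.2 (div_pos hβ₀ hβ)) (rateDefect_le_log_two hβm)
end

section
/- Let c(β) := e^{−β/2}/(1 − e^{−β/2}) and β₀ := 2 log(1 + 1/log 2). Then for every β > β₀ and every N ∈ ℕ, P( sup_{n=0,…,N} B(e^{β n}) ≤ 0 ) ≤ (1/2) exp( −(log 2 − c(β)) N ). (Note that c(β) ∈ (0, log 2) for β > β₀.) -/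
/-!
Write `τ` for the observation times, with an extra time `τ 0 = 0`. By induction on `N` we bound
the exponentially tilted survival quantity `E[e^{-θ B(τ N)}; B(τ n) ≤ 0 for n ≤ N]`. Conditioning
on the past, the independent Gaussian increment `X ~ N(0, v)` over `[τ N, τ (N+1)]` enters only
through `E[e^{-θ X}; X ≤ r] = e^{θ²v/2} P(X ≤ r + θv)` with `r = -B(τ N) ≥ 0`, and
`P(X ≤ u) ≤ ½ e^{(4/5) u/√v}`. So each step costs a factor `½` times an explicit exponential and
raises the tilt by `(4/5)/√v`. For the geometric times `e^{βn} = q^{2n}`, `q = e^{β/2} ≥ 2`, the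
accumulated cost is at most `1/(q - 1)` per step, and `θ = 0` gives the theorem.
-/

open MeasureTheory ProbabilityTheory Filter Real

open scoped NNReal
open Set

namespace ProbabilityTheory

variable {v : ℝ≥0}

lemma gaussianReal_Iic_zero (hv : v ≠ 0) : gaussianReal 0 v (Iic 0) = 2⁻¹ := by
  have := nullSingletonClass_gaussianReal (μ := 0) hv
  have hneg : (gaussianReal 0 v).map (fun x => -x) = gaussianReal 0 v := by
    simpa using gaussianReal_map_neg (μ := 0) (v := v)
  have hsymm : gaussianReal 0 v (Ioi 0) = gaussianReal 0 v (Iic 0) := by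
    rw [← hneg, Measure.map_apply (by fun_prop) measurableSet_Ioi, hneg,
      ← measure_congr (Iio_ae_eq_Iic (a := (0:ℝ)))]
    congr 1
    ext x
    simp
  have htotal : gaussianReal 0 v (Iic 0) + gaussianReal 0 v (Ioi 0) = 1 := by
    rw [← compl_Iic, measure_add_measure_compl measurableSet_Iic, measure_univ]
  rw [hsymm, ← two_mul] at htotal
  exact ENNReal.eq_inv_of_mul_eq_one_left (by rwa [mul_comm])

lemma gaussianPDFReal_le_inv_sqrt (μ : ℝ) (v : ℝ≥0) (x : ℝ) :
    gaussianPDFReal μ v x ≤ (√(2 * π * v))⁻¹ := by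
  rw [gaussianPDFReal]
  refine mul_le_of_le_one_right (by positivity) (exp_le_one_iff.mpr ?_)
  exact div_nonpos_of_nonpos_of_nonneg (neg_nonpos.mpr (sq_nonneg _)) (by positivity)

lemma gaussianReal_Ioc_zero_le (hv : v ≠ 0) (u : ℝ) :
    gaussianReal 0 v (Ioc 0 u) ≤ ENNReal.ofReal (u / √(2 * π * v)) := by
  calc gaussianReal 0 v (Ioc 0 u) = ∫⁻ x in Ioc 0 u, gaussianPDF 0 v x := gaussianReal_apply _ hv _
    _ ≤ ∫⁻ _ in Ioc 0 u, ENNReal.ofReal (√(2 * π * v))⁻¹ :=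
        setLIntegral_mono (by fun_prop) fun x _ =>
          ENNReal.ofReal_le_ofReal (gaussianPDFReal_le_inv_sqrt 0 v x)
    _ = ENNReal.ofReal (u / √(2 * π * v)) := by
        rw [setLIntegral_const, Real.volume_Ioc, sub_zero, ← ENNReal.ofReal_mul (by positivity),
          div_eq_inv_mul]

/-- `4 / 5` is a convenient upper bound for `√(2 / π)`: the density is at most `1 / √(2πv)`,
so `P(Z ≤ u) ≤ 1 / 2 + u / √(2πv)`, and `1 + x ≤ eˣ`. -/
lemma gaussianReal_Iic_le_half_mul_exp (hv : v ≠ 0) {u : ℝ} (hu : 0 ≤ u) :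
    gaussianReal 0 v (Iic u) ≤ ENNReal.ofReal (1 / 2 * exp (4 / 5 * u / √v)) := by
  have hsplit : gaussianReal 0 v (Iic u) ≤ ENNReal.ofReal (1 / 2 + u / √(2 * π * v)) := by
    rw [← Iic_union_Ioc_eq_Iic hu, ENNReal.ofReal_add (by norm_num) (by positivity),
      ENNReal.ofReal_div_of_pos two_pos, ENNReal.ofReal_one, ENNReal.ofReal_ofNat, one_div,
      ← gaussianReal_Iic_zero hv]
    exact (measure_union_le _ _).trans (by gcongr; exact gaussianReal_Ioc_zero_le hv u)
  refine hsplit.trans (ENNReal.ofReal_le_ofReal ?_)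
  have hv' : 0 < √(v : ℝ) := Real.sqrt_pos.mpr (by positivity)
  have hπ : 5 / 2 ≤ √(2 * π) := by
    rw [Real.le_sqrt (by norm_num) (by positivity)]
    nlinarith [Real.pi_gt_d2]
  have hlin : u / √(2 * π * v) ≤ 2 / 5 * (u / √v) := by
    rw [Real.sqrt_mul (by positivity), mul_comm, ← div_div, div_le_iff₀ (by positivity)]
    nlinarith [div_nonneg hu hv'.le]
  rw [mul_div_assoc]
  nlinarith [add_one_le_exp (4 / 5 * (u / √v))]

lemma gaussianPDFReal_mul_exp_neg_mul (θ x : ℝ) (hv : v ≠ 0) :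
    gaussianPDFReal 0 v x * exp (-θ * x) = exp (θ ^ 2 * v / 2) * gaussianPDFReal (-θ * v) v x := by
  have : (v : ℝ) ≠ 0 := by exact_mod_cast hv
  simp only [gaussianPDFReal]
  rw [mul_assoc, ← exp_add, mul_left_comm, ← exp_add]
  congr 2
  field_simp
  ring

lemma setLIntegral_Iic_exp_neg_mul_gaussianReal (hv : v ≠ 0) (θ r : ℝ) :
    ∫⁻ x in Iic r, ENNReal.ofReal (exp (-θ * x)) ∂gaussianReal 0 v
      = ENNReal.ofReal (exp (θ ^ 2 * v / 2)) * gaussianReal 0 v (Iic (r + θ * v)) := by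
  have hshift : gaussianReal 0 v (Iic (r + θ * v)) = gaussianReal (-θ * v) v (Iic r) := by
    rw [← zero_add (-θ * v), ← gaussianReal_map_add_const, Measure.map_apply (by fun_prop)
      measurableSet_Iic]
    congr 1
    ext x
    simp [sub_eq_add_neg]
  rw [hshift, gaussianReal_of_var_ne_zero _ hv, setLIntegral_withDensity_eq_setLIntegral_mul _
    (measurable_gaussianPDF _ _) (by fun_prop) measurableSet_Iic, gaussianReal_apply _ hv,
    ← lintegral_const_mul _ (measurable_gaussianPDF _ _)]
  refine setLIntegral_congr_fun measurableSet_Iic fun x _ => ?_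
  simp only [Pi.mul_apply, gaussianPDF, ← ENNReal.ofReal_mul (gaussianPDFReal_nonneg _ _ _),
    ← ENNReal.ofReal_mul (exp_nonneg _), gaussianPDFReal_mul_exp_neg_mul θ x hv]

lemma setLIntegral_Iic_exp_neg_mul_gaussianReal_le (hv : v ≠ 0) {θ r : ℝ} (hθ : 0 ≤ θ)
    (hr : 0 ≤ r) :
    ∫⁻ x in Iic r, ENNReal.ofReal (exp (-θ * x)) ∂gaussianReal 0 v
      ≤ ENNReal.ofReal (1 / 2 * exp (θ ^ 2 * v / 2 + 4 / 5 * θ * √v + 4 / 5 * r / √v)) := by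
  have hsv : 0 < √(v : ℝ) := Real.sqrt_pos.mpr (by positivity)
  rw [setLIntegral_Iic_exp_neg_mul_gaussianReal hv]
  refine (mul_le_mul_right (gaussianReal_Iic_le_half_mul_exp hv (by positivity)) _).trans
    (le_of_eq ?_)
  rw [← ENNReal.ofReal_mul (exp_nonneg _), mul_left_comm, ← exp_add]
  congr 3
  field_simp
  linear_combination (-8 * θ) * Real.sq_sqrt v.coe_nonneg

variable {E : Type*}

lemma lintegral_indicator_exp_neg_mul_add_gaussianReal_le (hv : v ≠ 0) {S : Set E} {f : E → ℝ}
    (hfS : ∀ y ∈ S, f y ≤ 0) {θ : ℝ} (hθ : 0 ≤ θ) (y : E) :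
    ∫⁻ x, {p : E × ℝ | p.1 ∈ S ∧ f p.1 + p.2 ≤ 0}.indicator
        (fun p => ENNReal.ofReal (exp (-θ * (f p.1 + p.2)))) (y, x) ∂gaussianReal 0 v
      ≤ S.indicator (fun y => ENNReal.ofReal (1 / 2 * exp (θ ^ 2 * v / 2 + 4 / 5 * θ * √v))
          * ENNReal.ofReal (exp (-(θ + 4 / 5 / √v) * f y))) y := by
  by_cases hy : y ∈ S
  · have hsv : 0 < √(v : ℝ) := Real.sqrt_pos.mpr (by positivity)
    have hfactor : ∀ x, {p : E × ℝ | p.1 ∈ S ∧ f p.1 + p.2 ≤ 0}.indicator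
        (fun p => ENNReal.ofReal (exp (-θ * (f p.1 + p.2)))) (y, x)
          = ENNReal.ofReal (exp (-θ * f y))
            * (Iic (-f y)).indicator (fun x => ENNReal.ofReal (exp (-θ * x))) x := by
      intro x
      by_cases hx : x ≤ -f y
      · rw [indicator_of_mem (show (y, x) ∈ {p : E × ℝ | p.1 ∈ S ∧ f p.1 + p.2 ≤ 0} from
          ⟨hy, by linarith⟩), indicator_of_mem (show x ∈ Iic (-f y) from hx),
          ← ENNReal.ofReal_mul (exp_nonneg _), ← exp_add, mul_add]
      · rw [indicator_of_notMem (fun h => hx (by linarith [h.2])),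
          indicator_of_notMem (show x ∉ Iic (-f y) from hx),
          mul_zero]
    simp_rw [hfactor]
    have hmeas : Measurable fun x : ℝ => ENNReal.ofReal (exp (-θ * x)) := by fun_prop
    rw [lintegral_const_mul _ (hmeas.indicator measurableSet_Iic),
      lintegral_indicator measurableSet_Iic, indicator_of_mem hy]
    refine (mul_le_mul_right (setLIntegral_Iic_exp_neg_mul_gaussianReal_le hv hθ
      (neg_nonneg.mpr (hfS y hy))) _).trans (le_of_eq ?_)
    rw [← ENNReal.ofReal_mul (exp_nonneg _), ← ENNReal.ofReal_mul (by positivity)]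
    congr 1
    rw [mul_left_comm, ← exp_add, mul_assoc (1 / 2), ← exp_add]
    congr 2
    field_simp
    ring
  · have hempty : ∀ x, (y, x) ∉ {p : E × ℝ | p.1 ∈ S ∧ f p.1 + p.2 ≤ 0} := fun x h => hy h.1
    simp [indicator_of_notMem (hempty _), indicator_of_notMem hy]

variable {Ω : Type*} [MeasurableSpace Ω] [MeasurableSpace E] {P : Measure Ω}

lemma IndepFun.setLIntegral_exp_neg_mul_add_le [IsFiniteMeasure P] {V : Ω → E} {X : Ω → ℝ}
    (hVX : IndepFun V X P) (hV : Measurable V) (hX : Measurable X)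
    (hXlaw : P.map X = gaussianReal 0 v) (hv : v ≠ 0) {S : Set E} (hS : MeasurableSet S)
    {f : E → ℝ} (hf : Measurable f) (hfS : ∀ y ∈ S, f y ≤ 0) {θ : ℝ} (hθ : 0 ≤ θ) :
    ∫⁻ ω in {ω | V ω ∈ S ∧ f (V ω) + X ω ≤ 0}, ENNReal.ofReal (exp (-θ * (f (V ω) + X ω))) ∂P
      ≤ ENNReal.ofReal (1 / 2 * exp (θ ^ 2 * v / 2 + 4 / 5 * θ * √v))
        * ∫⁻ ω in V ⁻¹' S, ENNReal.ofReal (exp (-(θ + 4 / 5 / √v) * f (V ω))) ∂P := by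
  set T : Set (E × ℝ) := {p | p.1 ∈ S ∧ f p.1 + p.2 ≤ 0}
  have hT : MeasurableSet T :=
    (measurable_fst hS).inter (measurableSet_le ((hf.comp measurable_fst).add measurable_snd)
      measurable_const)
  calc _ = ∫⁻ p in T, ENNReal.ofReal (exp (-θ * (f p.1 + p.2))) ∂P.map fun ω => (V ω, X ω) :=
        (setLIntegral_map hT (by fun_prop) (hV.prodMk hX)).symm
    _ = ∫⁻ p, T.indicator (fun p => ENNReal.ofReal (exp (-θ * (f p.1 + p.2)))) p
          ∂(P.map V).prod (gaussianReal 0 v) := by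
        rw [lintegral_indicator hT, hVX.map_prod_eq_prod_map_map hV.aemeasurable hX.aemeasurable,
          hXlaw]
    _ ≤ ∫⁻ y, ∫⁻ x, T.indicator (fun p => ENNReal.ofReal (exp (-θ * (f p.1 + p.2)))) (y, x)
          ∂gaussianReal 0 v ∂P.map V := lintegral_prod_le _
    _ ≤ ∫⁻ y, S.indicator (fun y => ENNReal.ofReal (1 / 2 * exp (θ ^ 2 * v / 2 + 4 / 5 * θ * √v))
          * ENNReal.ofReal (exp (-(θ + 4 / 5 / √v) * f y))) y ∂P.map V :=
        lintegral_mono fun y => lintegral_indicator_exp_neg_mul_add_gaussianReal_le hv hfS hθ y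
    _ = _ := by
        rw [lintegral_indicator hS, setLIntegral_map hS (by fun_prop) hV,
          lintegral_const_mul _ (by fun_prop)]

end ProbabilityTheory

/-- One step of the recursion is one conditioning step: the increment over `[τ N, τ (N + 1)]`
costs the factor in front and raises the tilt by `4 / 5 / √(τ (N + 1) - τ N)`. -/
noncomputable def survivalBound (τ : ℕ → ℝ) : ℕ → ℝ → ℝ
  | 0, _ => 1
  | N + 1, θ => 1 / 2 * exp (θ ^ 2 * (τ (N + 1) - τ N) / 2 + 4 / 5 * θ * √(τ (N + 1) - τ N))
      * survivalBound τ N (θ + 4 / 5 / √(τ (N + 1) - τ N))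

namespace IsStandardBM

variable {Ω : Type*} [MeasurableSpace Ω] {P : Measure Ω} {B : ℝ → Ω → ℝ}

lemma indepFun_past_increment (hB : IsStandardBM P B) {τ : ℕ → ℝ} (hτ : Monotone τ) (hτ0 : τ 0 = 0)
    (N : ℕ) :
    IndepFun (fun ω (i : Fin (N + 1)) => B (τ i) ω) (fun ω => B (τ (N + 1)) ω - B (τ N) ω) P := by
  -- `B (τ k)` telescopes into the first `k` increments, all of them before the last one
  set Z : Fin (N + 1) → Ω → ℝ := fun i ω => B (τ (i + 1)) ω - B (τ i) ω
  set S : Finset (Fin (N + 1)) := Finset.univ.filter fun i => (i : ℕ) < N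
  set T : Finset (Fin (N + 1)) := {Fin.last N}
  have hST : Disjoint S T := by simp [S, T]
  have hind := (hB.indep (N + 1) τ hτ fun i => hτ0 ▸ hτ (Nat.zero_le i)).indepFun_finset S T hST
    fun i => (hB.meas _).sub (hB.meas _)
  let past : (S → ℝ) → Fin (N + 1) → ℝ := fun g k => ∑ j ∈ Finset.range k,
    if h : j < N then g ⟨⟨j, by omega⟩, by simp [S, h]⟩ else 0
  have hpast : Measurable past := by
    refine measurable_pi_lambda _ fun k => Finset.measurable_sum _ fun j _ => ?_
    split
    · exact measurable_pi_apply _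
    · exact measurable_const
  have hpast_eq : (fun ω (i : Fin (N + 1)) => B (τ i) ω) = past ∘ fun ω (i : S) => Z i ω := by
    ext ω k
    have hterm : ∀ j ∈ Finset.range k, (if h : j < N then Z ⟨j, by omega⟩ ω else 0)
        = B (τ (j + 1)) ω - B (τ j) ω := fun j hj => by
      rw [dif_pos (by have := k.2; simp at hj; omega)]
    simp only [Function.comp_apply, past]
    rw [Finset.sum_congr rfl hterm, Finset.sum_range_sub (fun j => B (τ j) ω), hτ0, hB.start,
      sub_zero]
  have hlast_eq : (fun ω => B (τ (N + 1)) ω - B (τ N) ω)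
      = (fun g : T → ℝ => g ⟨Fin.last N, Finset.mem_singleton_self _⟩)
          ∘ fun ω (i : T) => Z i ω := by
    ext ω
    simp [Z]
  rw [hpast_eq, hlast_eq]
  exact hind.comp hpast (measurable_pi_apply _)

lemma setLIntegral_exp_neg_mul_le_survivalBound (hB : IsStandardBM P B) {τ : ℕ → ℝ}
    (hτ : StrictMono τ) (hτ0 : τ 0 = 0) (N : ℕ) {θ : ℝ} (hθ : 0 ≤ θ) :
    ∫⁻ ω in {ω | ∀ n ≤ N, B (τ n) ω ≤ 0}, ENNReal.ofReal (exp (-θ * B (τ N) ω)) ∂P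
      ≤ ENNReal.ofReal (survivalBound τ N θ) := by
  have := hB.isProb
  induction N generalizing θ with
  | zero => simp [survivalBound, hτ0, hB.start]
  | succ N ih =>
    have hincr : 0 < τ (N + 1) - τ N := sub_pos.mpr (hτ N.lt_succ_self)
    have hτnonneg : 0 ≤ τ N := hτ0 ▸ hτ.monotone (Nat.zero_le N)
    have hstep := (hB.indepFun_past_increment hτ.monotone hτ0 N).setLIntegral_exp_neg_mul_add_le
      (measurable_pi_lambda _ fun i => hB.meas _) ((hB.meas _).sub (hB.meas _))
      (hB.gauss _ _ hτnonneg (hτ.monotone N.le_succ)) (by simpa using hincr)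
      (measurableSet_Iic (a := (0 : Fin (N + 1) → ℝ))) (measurable_pi_apply (Fin.last N))
      (fun y hy => mem_Iic.mp hy (Fin.last N)) hθ
    simp only [Fin.val_last, add_sub_cancel, Real.coe_toNNReal _ hincr.le] at hstep
    have hpast : (fun ω (i : Fin (N + 1)) => B (τ i) ω) ⁻¹' Iic 0
        = {ω | ∀ n ≤ N, B (τ n) ω ≤ 0} := by
      ext ω
      simp [Pi.le_def, Fin.forall_iff]
    have hA : {ω | ∀ n ≤ N + 1, B (τ n) ω ≤ 0}
        = {ω | (fun i : Fin (N + 1) => B (τ i) ω) ∈ Iic 0 ∧ B (τ (N + 1)) ω ≤ 0} := by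
      ext ω
      have hpast_ω := Set.ext_iff.mp hpast ω
      simp only [mem_preimage, mem_ofPred_eq] at hpast_ω ⊢
      rw [hpast_ω]
      exact ⟨fun h => ⟨fun n hn => h n (by omega), h _ le_rfl⟩, fun ⟨hbefore, hlast⟩ n hn =>
        (Nat.le_succ_iff.mp hn).elim (hbefore n) fun hn => hn ▸ hlast⟩
    rw [hA]
    refine hstep.trans ?_
    rw [hpast, survivalBound, ENNReal.ofReal_mul (mul_nonneg (by norm_num) (exp_nonneg _))]
    exact mul_le_mul_right (ih (add_nonneg hθ (by positivity))) _

lemma measure_le_survivalBound (hB : IsStandardBM P B) {τ : ℕ → ℝ} (hτ : StrictMono τ)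
    (hτ0 : τ 0 = 0) (N : ℕ) :
    P {ω | ∀ n ≤ N, B (τ n) ω ≤ 0} ≤ ENNReal.ofReal (survivalBound τ N 0) := by
  simpa using hB.setLIntegral_exp_neg_mul_le_survivalBound hτ hτ0 N le_rfl

end IsStandardBM

def geomTimes (q : ℝ) : ℕ → ℝ
  | 0 => 0
  | n + 1 => q ^ (2 * n)

lemma geomTimes_strictMono {q : ℝ} (hq : 1 < q) : StrictMono (geomTimes q) := by
  refine strictMono_nat_of_lt_succ fun n => ?_
  cases n with
  | zero => simp [geomTimes]
  | succ n => exact pow_lt_pow_right₀ hq (by omega)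

lemma geomTimes_exp_succ (β : ℝ) (n : ℕ) : geomTimes (exp (β / 2)) (n + 1) = exp (β * n) := by
  rw [geomTimes, ← exp_nat_mul]
  push_cast
  ring_nf

lemma survivalBound_geomTimes_le {q : ℝ} (hq : 2 ≤ q) (N : ℕ) {θ : ℝ} (hθ : 0 ≤ θ) :
    survivalBound (geomTimes q) (N + 1) θ ≤ (1 / 2) ^ (N + 1) * exp (θ ^ 2 * q ^ (2 * N) / 2
      + θ * (4 / 5 * q ^ (N + 2) / (√(q ^ 2 - 1) * (q - 1))) + N / (q - 1)) := by
  set σ := √(q ^ 2 - 1)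
  have hσ : 0 < σ := Real.sqrt_pos.mpr (by nlinarith)
  have hσ2 : σ ^ 2 = q ^ 2 - 1 := Real.sq_sqrt (by nlinarith)
  have hσq : σ ≤ q := by nlinarith
  have hq1 : 0 < q - 1 := by linarith
  induction N generalizing θ with
  | zero =>
    simp only [survivalBound, geomTimes, mul_zero, pow_zero, sub_zero, Real.sqrt_one, mul_one,
      CharP.cast_eq_zero, zero_div, add_zero, zero_add, pow_one]
    refine mul_le_mul_of_nonneg_left (exp_le_exp.mpr ?_) (by norm_num)
    have hw : 4 / 5 ≤ 4 / 5 * q ^ 2 / (σ * (q - 1)) := by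
      rw [le_div_iff₀ (by positivity)]
      nlinarith
    nlinarith
  | succ N ih =>
    have hsqrt : √(q ^ (2 * (N + 1)) - q ^ (2 * N)) = q ^ N * σ := by
      rw [show q ^ (2 * (N + 1)) - q ^ (2 * N) = (q ^ N) ^ 2 * (q ^ 2 - 1) by ring,
        Real.sqrt_mul (by positivity), Real.sqrt_sq (by positivity)]
    have hextra : 8 / 25 / σ ^ 2 + 16 / 25 * q ^ 2 / (σ ^ 2 * (q - 1)) ≤ 1 / (q - 1) := by
      have hq21 : 0 < q ^ 2 - 1 := by nlinarith
      rw [hσ2, div_add_div _ _ hq21.ne' (by positivity), div_le_div_iff₀ (by positivity) hq1]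
      have hquad : 0 ≤ 9 * q ^ 2 - 8 * q - 17 := by nlinarith
      nlinarith [mul_nonneg (mul_nonneg hq21.le hq1.le) hquad]
    rw [survivalBound]
    simp only [geomTimes, hsqrt]
    refine (mul_le_mul_of_nonneg_left (ih (by positivity)) (by positivity)).trans ?_
    rw [mul_mul_mul_comm, ← pow_succ', ← exp_add]
    refine mul_le_mul_of_nonneg_left (exp_le_exp.mpr ?_) (by positivity)
    have hid : θ ^ 2 * (q ^ (2 * (N + 1)) - q ^ (2 * N)) / 2 + 4 / 5 * θ * (q ^ N * σ) +
        ((θ + 4 / 5 / (q ^ N * σ)) ^ 2 * q ^ (2 * N) / 2 +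
          (θ + 4 / 5 / (q ^ N * σ)) * (4 / 5 * q ^ (N + 2) / (σ * (q - 1))) + N / (q - 1))
        = θ ^ 2 * q ^ (2 * (N + 1)) / 2 + θ * (4 / 5 * q ^ (N + 1 + 2) / (σ * (q - 1)))
          + N / (q - 1) + (8 / 25 / σ ^ 2 + 16 / 25 * q ^ 2 / (σ ^ 2 * (q - 1))) := by
      field_simp
      -- the terms linear in `θ` match because `σ ^ 2 + 1 = q ^ 2`
      linear_combination 1000 * θ * q ^ (3 * N) * σ * (q - 1) * hσ2
    rw [hid]
    push_cast
    linarith [add_div (N : ℝ) 1 (q - 1)]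

lemma IsStandardBM.measure_forall_exp_le_zero_le {Ω : Type*} [MeasurableSpace Ω] {P : Measure Ω}
    {B : ℝ → Ω → ℝ} (hB : IsStandardBM P B) {β : ℝ} (hβ : 2 ≤ exp (β / 2)) (N : ℕ) :
    P {ω | ∀ n ≤ N, B (exp (β * n)) ω ≤ 0}
      ≤ ENNReal.ofReal ((1 / 2) ^ (N + 1) * exp (N / (exp (β / 2) - 1))) := by
  have hevent : {ω | ∀ n ≤ N, B (exp (β * n)) ω ≤ 0}
      = {ω | ∀ n ≤ N + 1, B (geomTimes (exp (β / 2)) n) ω ≤ 0} := by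
    ext ω
    refine ⟨fun h n hn => ?_, fun h n hn => ?_⟩
    · cases n with
      | zero => simp [geomTimes, hB.start]
      | succ n => exact geomTimes_exp_succ β n ▸ h n (by omega)
    · exact geomTimes_exp_succ β n ▸ h (n + 1) (by omega)
  rw [hevent]
  exact (hB.measure_le_survivalBound (geomTimes_strictMono (by linarith)) rfl (N + 1)).trans
    (ENNReal.ofReal_le_ofReal (by simpa using survivalBound_geomTimes_le hβ N le_rfl))

/-- For `β > β₀ = 2 log(1 + 1/log 2)` and every `N`,
`P(sup_{n=0,…,N} B(e^{β n}) ≤ 0) ≤ (1/2) exp(-(log 2 - c(β)) N)`, where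
`c(β) = e^{-β/2}/(1 - e^{-β/2}) ∈ (0, log 2)`. -/
theorem expSurvival_upper_bound_large_beta
    {Ω : Type*} [MeasurableSpace Ω] (P : Measure Ω) (B : ℝ → Ω → ℝ)
    (hB : IsStandardBM P B) (β : ℝ) (hβ : 2 * Real.log (1 + 1 / Real.log 2) < β) :
    0 < Real.exp (-β / 2) / (1 - Real.exp (-β / 2)) ∧
    Real.exp (-β / 2) / (1 - Real.exp (-β / 2)) < Real.log 2 ∧
    ∀ N : ℕ,
      (P {ω | ∀ n : ℕ, n ≤ N → B (Real.exp (β * n)) ω ≤ 0}).toReal ≤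
        1 / 2 * Real.exp (-(Real.log 2 -
          Real.exp (-β / 2) / (1 - Real.exp (-β / 2))) * N) := by
  have hlog2 : 0 < log 2 := log_pos one_lt_two
  have hlog2_lt : log 2 < 1 := by linarith [log_two_lt_d9]
  set q := exp (β / 2) with hq_def
  have hq : 1 / log 2 < q - 1 := by
    have : exp (log (1 + 1 / log 2)) < q := exp_lt_exp.mpr (by linarith)
    rw [exp_log (by positivity)] at this
    linarith
  have hq2 : 2 ≤ q := by linarith [(one_lt_div hlog2).mpr hlog2_lt]
  have hc : exp (-β / 2) / (1 - exp (-β / 2)) = 1 / (q - 1) := by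
    rw [show -β / 2 = -(β / 2) by ring, exp_neg, ← hq_def]
    field_simp
  rw [hc]
  refine ⟨by apply div_pos one_pos; linarith, ?_, fun N => ?_⟩
  · rw [div_lt_iff₀ (by linarith), ← div_lt_iff₀' hlog2]
    exact hq
  refine (ENNReal.toReal_le_of_le_ofReal (by positivity)
    (hB.measure_forall_exp_le_zero_le hq2 N)).trans (le_of_eq ?_)
  rw [show -(log 2 - 1 / (q - 1)) * N = N * -log 2 + N / (q - 1) by ring, exp_add, exp_nat_mul,
    exp_neg, exp_log two_pos]
  simp only [one_div, inv_pow]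
  ring
end
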